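/- arXiv:2503.23196 — 2 statements merged into one kernel-verified Lean document; each statement's English description precedes it below -/
import Mathlib

section
/- Let d1, d2 be integers with 1 < d1 < d2, let 𝒢 be the Sprague–Grundy function of i-MARK({1},{d1,d2}), and let d ∈ {d1,d2}. Suppose the positions n and n+1 are both d-conducive (i.e., d·n+1 and d·(n+1)+1 are bottlenecks) and n+1 is itself a bottleneck. Then for every starting position m with 0 < m < d·n and every guess seed σ for m, the guess sequence satisfies 𝒢_σ(j) = 𝒢(j) for all j ≥ d·(n+1)+1. -/
/-- The minimum excludant of a set of naturals. -/
noncomputable def mex (T : Set ℕ) : ℕ := sInf {k : ℕ | k ∉ T}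

/-- The set of followers of position `n` in the game i-MARK(S,D):
`n - s` for `s ∈ S` with `0 < s ≤ n`, and `n / d` for `d ∈ D` with `2 ≤ d`, `0 < n`, `d ∣ n`. -/
def followers (S D : Finset ℕ) (n : ℕ) : Finset ℕ :=
  ((S.filter fun s => 0 < s ∧ s ≤ n).image fun s => n - s) ∪
  ((D.filter fun d => 2 ≤ d ∧ 0 < n ∧ d ∣ n).image fun d => n / d)

theorem followers_lt {S D : Finset ℕ} {n m : ℕ} (h : m ∈ followers S D n) : m < n := by
  simp only [followers, Finset.mem_union, Finset.mem_image, Finset.mem_filter] at h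
  rcases h with ⟨s, ⟨-, hs, hsn⟩, rfl⟩ | ⟨d, ⟨-, hd, hn, -⟩, rfl⟩
  · omega
  · exact Nat.div_lt_self hn (by omega)

/-- The Sprague–Grundy function of i-MARK(S,D). -/
noncomputable def grundy (S D : Finset ℕ) : ℕ → ℕ
  | n => mex ↑((followers S D n).attach.image fun m => grundy S D m.1)
decreasing_by exact followers_lt m.2

/-- The number of followers of position `n` in i-MARK(S,D) (for positive `S` and `D` with
elements `≥ 2`): `φ(0) = 0` and `φ(n) = #{s ∈ S : s ≤ n} + #{d ∈ D : d ∣ n}` for `n > 0`. -/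
def numFollowers (S D : Finset ℕ) (n : ℕ) : ℕ :=
  if n = 0 then 0 else (S.filter fun s => s ≤ n).card + (D.filter fun d => d ∣ n).card

/-- `σ : ℕ → ℕ` is a guess seed for starting position `n` in i-MARK(S,D) if
`σ i ≤ φ(i)` for all `n ≤ i < n + max S` (values of `σ` outside this window are irrelevant). -/
def IsGuessSeed (S D : Finset ℕ) (n : ℕ) (σ : ℕ → ℕ) : Prop :=
  ∀ i, n ≤ i → i < n + S.sup id → σ i ≤ numFollowers S D i

/-- The guess sequence generated by seed `σ` from starting position `n`: it equals `σ` on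
`[n, n + max S)`, and from `n + max S` on it is computed by the mex rule, using guessed values
for subtraction followers and true Grundy values for division followers. -/
noncomputable def guessSeq (S D : Finset ℕ) (n : ℕ) (σ : ℕ → ℕ) : ℕ → ℕ
  | m =>
    if m < n + S.sup id then σ m
    else
      mex ((↑((S.filter fun t => 0 < t ∧ t ≤ m).attach.image
              fun t => guessSeq S D n σ (m - t.1)) : Set ℕ) ∪
        {g | ∃ d ∈ D, 2 ≤ d ∧ 0 < m ∧ d ∣ m ∧ g = grundy S D (m / d)})
decreasing_by
  have ht := t.2
  simp only [Finset.mem_filter] at ht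
  omega

/-- Convergence occurs in `c` steps at starting position `n`: any two guess sequences from `n`
agree on all positions `m` with `n + c ≤ m < n + c + max S`. -/
def ConvergesIn (S D : Finset ℕ) (n c : ℕ) : Prop :=
  ∀ σ σ' : ℕ → ℕ, IsGuessSeed S D n σ → IsGuessSeed S D n σ' →
    ∀ m, n + c ≤ m → m < n + c + S.sup id → guessSeq S D n σ m = guessSeq S D n σ' m

/-! A bottleneck `p + 1` has only the subtraction follower `p`, so both the Grundy function and
every guess sequence take the value `mex {x} ∈ {0, 1}` there, which is `0` as soon as the
previous value `x` is nonzero. If `𝒢(k) = 0`, then `0` is the value of the division follower `k`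
of `d·k`, so both sequences are nonzero at `d·k`, and if `d·k + 1` is a bottleneck they agree
there; from then on they obey the same recursion. At the bottleneck `n + 1`, one of `𝒢(n)`,
`𝒢(n + 1)` vanishes. -/

lemma mex_singleton_of_ne_zero {x : ℕ} (hx : x ≠ 0) : mex {x} = 0 :=
  Nat.sInf_eq_zero.2 (Or.inl (by simp [hx.symm]))

lemma mex_ne_zero_of_zero_mem {T : Set ℕ} (hT : T.Finite) (h0 : 0 ∈ T) : mex T ≠ 0 := by
  intro h
  have hmem : mex T ∈ {k : ℕ | k ∉ T} := Nat.sInf_mem hT.infinite_compl.nonempty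
  exact hmem (h ▸ h0)

-- The paper's requirement `p > 0` is implied as soon as `D` is nonempty.
def IsBottleneck (D : Finset ℕ) (p : ℕ) : Prop := ∀ d ∈ D, ¬ d ∣ p

lemma isBottleneck_pair {d₁ d₂ p : ℕ} (h : ¬ d₁ ∣ p ∧ ¬ d₂ ∣ p) :
    IsBottleneck {d₁, d₂} p := by
  simpa [IsBottleneck] using h

def divisionValues (D : Finset ℕ) (p : ℕ) : Set ℕ :=
  {g | ∃ d ∈ D, 2 ≤ d ∧ 0 < p ∧ d ∣ p ∧ g = grundy {1} D (p / d)}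

section OneSubtraction

variable {D : Finset ℕ}

lemma divisionValues_finite (p : ℕ) : (divisionValues D p).Finite := by
  refine (D.image fun d => grundy {1} D (p / d)).finite_toSet.subset ?_
  rintro g ⟨d, hd, -, -, -, rfl⟩
  exact Finset.mem_image_of_mem _ hd

lemma divisionValues_eq_empty {p : ℕ} (hp : IsBottleneck D p) : divisionValues D p = ∅ :=
  Set.eq_empty_of_forall_notMem fun _ ⟨d, hd, _, _, hdvd, _⟩ => hp d hd hdvd

lemma mex_insert_divisionValues_ne_zero {p : ℕ} (x : ℕ) (h0 : 0 ∈ divisionValues D p) :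
    mex (insert x (divisionValues D p)) ≠ 0 :=
  mex_ne_zero_of_zero_mem ((divisionValues_finite p).insert x) (Set.mem_insert_of_mem x h0)

lemma zero_mem_divisionValues_mul {d k : ℕ} (hd : d ∈ D) (hd2 : 2 ≤ d) (hk : 0 < d * k)
    (h0 : grundy {1} D k = 0) : 0 ∈ divisionValues D (d * k) :=
  ⟨d, hd, hd2, hk, dvd_mul_right d k, by rw [Nat.mul_div_cancel_left k (by omega), h0]⟩

lemma grundy_one_eq_mex {p : ℕ} (hp : 0 < p) :
    grundy {1} D p = mex (insert (grundy {1} D (p - 1)) (divisionValues D p)) := by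
  rw [grundy]
  congr 1
  ext g
  simp only [followers, Finset.coe_image, Set.mem_image, Finset.mem_coe, Finset.mem_attach,
    true_and, Subtype.exists, Finset.mem_union, Finset.mem_image, Finset.mem_filter,
    Finset.mem_singleton, Set.mem_insert_iff, divisionValues, Set.mem_ofPred_eq]
  constructor
  · rintro ⟨_, ⟨s, ⟨rfl, -⟩, rfl⟩ | ⟨d, hd, rfl⟩, rfl⟩
    · exact Or.inl rfl
    · exact Or.inr ⟨d, hd.1, hd.2.1, hd.2.2.1, hd.2.2.2, rfl⟩
  · rintro (rfl | ⟨d, hd, hd2, hp, hdvd, rfl⟩)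
    · exact ⟨p - 1, Or.inl ⟨1, ⟨rfl, one_pos, hp⟩, rfl⟩, rfl⟩
    · exact ⟨p / d, Or.inr ⟨d, ⟨hd, hd2, hp, hdvd⟩, rfl⟩, rfl⟩

lemma guessSeq_one_eq_mex {m j : ℕ} (σ : ℕ → ℕ) (hj : m < j) :
    guessSeq {1} D m σ j =
      mex (insert (guessSeq {1} D m σ (j - 1)) (divisionValues D j)) := by
  rw [guessSeq, if_neg (by simp only [Finset.sup_singleton, id]; omega)]
  congr 1
  ext g
  simp only [Set.mem_union, Finset.coe_image, Set.mem_image, Finset.mem_coe, Finset.mem_attach,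
    true_and, Subtype.exists, Finset.mem_filter, Finset.mem_singleton, Set.mem_insert_iff,
    divisionValues]
  constructor
  · rintro (⟨t, ⟨rfl, -⟩, rfl⟩ | h)
    · exact Or.inl rfl
    · exact Or.inr h
  · rintro (rfl | h)
    · exact Or.inl ⟨1, ⟨rfl, one_pos, by omega⟩, rfl⟩
    · exact Or.inr h

lemma grundy_succ_of_isBottleneck {p : ℕ} (hp : IsBottleneck D (p + 1)) :
    grundy {1} D (p + 1) = mex {grundy {1} D p} := by
  rw [grundy_one_eq_mex (Nat.succ_pos p), divisionValues_eq_empty hp, Nat.succ_sub_one,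
    ← Set.singleton_def]

lemma guessSeq_succ_of_isBottleneck {m p : ℕ} (σ : ℕ → ℕ) (hmp : m ≤ p)
    (hp : IsBottleneck D (p + 1)) :
    guessSeq {1} D m σ (p + 1) = mex {guessSeq {1} D m σ p} := by
  rw [guessSeq_one_eq_mex σ (Nat.lt_add_one_of_le hmp), divisionValues_eq_empty hp,
    Nat.add_sub_cancel, ← Set.singleton_def]

lemma grundy_eq_zero_or_succ_eq_zero {n : ℕ} (hn : IsBottleneck D (n + 1)) :
    grundy {1} D n = 0 ∨ grundy {1} D (n + 1) = 0 := by
  by_cases h : grundy {1} D n = 0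
  · exact Or.inl h
  · exact Or.inr (by rw [grundy_succ_of_isBottleneck hn, mex_singleton_of_ne_zero h])

lemma guessSeq_eq_grundy_of_le {m j₀ : ℕ} (σ : ℕ → ℕ) (hm : m < j₀)
    (h : guessSeq {1} D m σ j₀ = grundy {1} D j₀) :
    ∀ j, j₀ ≤ j → guessSeq {1} D m σ j = grundy {1} D j := by
  intro j hj
  induction j, hj using Nat.le_induction with
  | base => exact h
  | succ k hk ih =>
    rw [guessSeq_one_eq_mex σ (by omega), grundy_one_eq_mex (Nat.succ_pos k),
      Nat.add_sub_cancel, ih]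

theorem guessSeq_eq_grundy_of_grundy_eq_zero {d k m : ℕ} (σ : ℕ → ℕ) (hd : d ∈ D)
    (hd2 : 2 ≤ d) (hk : grundy {1} D k = 0) (hm : m < d * k)
    (hconducive : IsBottleneck D (d * k + 1)) :
    ∀ j, d * k + 1 ≤ j → guessSeq {1} D m σ j = grundy {1} D j := by
  have h0 := zero_mem_divisionValues_mul hd hd2 (by omega) hk
  have hguess : guessSeq {1} D m σ (d * k) ≠ 0 := by
    rw [guessSeq_one_eq_mex σ hm]
    exact mex_insert_divisionValues_ne_zero _ h0
  have hgrundy : grundy {1} D (d * k) ≠ 0 := by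
    rw [grundy_one_eq_mex (by omega)]
    exact mex_insert_divisionValues_ne_zero _ h0
  refine guessSeq_eq_grundy_of_le σ (by omega) ?_
  rw [guessSeq_succ_of_isBottleneck σ hm.le hconducive, grundy_succ_of_isBottleneck hconducive,
    mex_singleton_of_ne_zero hguess, mex_singleton_of_ne_zero hgrundy]

end OneSubtraction

/-- In i-MARK({1},{d₁,d₂}) with `1 < d₁ < d₂` and `d ∈ {d₁,d₂}`: if `n` and `n+1` are both
`d`-conducive (i.e. `d·n+1` and `d·(n+1)+1` are bottlenecks) and `n+1` is itself a bottleneck,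
then every guess sequence starting at a position `0 < m < d·n` agrees with the true
Grundy function from position `d·(n+1)+1` on. -/
theorem guess_converges_after_conducive_pair (d₁ d₂ : ℕ) (h₁ : 1 < d₁) (h₂ : d₁ < d₂)
    (d : ℕ) (hd : d = d₁ ∨ d = d₂) (n : ℕ)
    (hconducive₁ : ¬ d₁ ∣ (d * n + 1) ∧ ¬ d₂ ∣ (d * n + 1))
    (hconducive₂ : ¬ d₁ ∣ (d * (n + 1) + 1) ∧ ¬ d₂ ∣ (d * (n + 1) + 1))
    (hbottleneck : ¬ d₁ ∣ (n + 1) ∧ ¬ d₂ ∣ (n + 1)) :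
    ∀ m : ℕ, 0 < m → m < d * n → ∀ σ : ℕ → ℕ, IsGuessSeed {1} {d₁, d₂} m σ →
      ∀ j : ℕ, d * (n + 1) + 1 ≤ j →
        guessSeq {1} {d₁, d₂} m σ j = grundy {1} {d₁, d₂} j := by
  intro m _ hmn σ _ j hj
  have hd2 : 2 ≤ d := by omega
  have hdD : d ∈ ({d₁, d₂} : Finset ℕ) := by rcases hd with rfl | rfl <;> simp
  have hstep : d * n + 1 ≤ d * (n + 1) + 1 := by gcongr; omega
  rcases grundy_eq_zero_or_succ_eq_zero (isBottleneck_pair hbottleneck) with h0 | h0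
  · exact guessSeq_eq_grundy_of_grundy_eq_zero σ hdD hd2 h0 hmn
      (isBottleneck_pair hconducive₁) j (hstep.trans hj)
  · exact guessSeq_eq_grundy_of_grundy_eq_zero σ hdD hd2 h0 (hmn.trans_le (by gcongr; omega))
      (isBottleneck_pair hconducive₂) j hj
end

section
/- Let 𝒢 be the Sprague–Grundy function of i-MARK({1,3},{2,3}) (so s = max S = 3). For every k ≥ 1 and every T ∈ {2,3}, the tuple σ = (0, 1, T) is a valid guess seed for starting position n = 12k, and its guess sequence satisfies, for every j ≥ 0: 𝒢_σ(n+12j) = 0, 𝒢_σ(n+12j+1) = 1, 𝒢_σ(n+12j+2) ∈ {2,3}, 𝒢_σ(n+12j+3) ≠ 0, 𝒢_σ(n+12j+4) = 0, 𝒢_σ(n+12j+5) = 1, 𝒢_σ(n+12j+6) ≠ 1, 𝒢_σ(n+12j+7) = 1, 𝒢_σ(n+12j+8) = 0, 𝒢_σ(n+12j+9) ≠ 0, 𝒢_σ(n+12j+10) ∈ {2,3}, and 𝒢_σ(n+12j+11) = 1. -/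
theorem isLeast_mex {T : Set ℕ} (hT : T.Finite) : IsLeast Tᶜ (mex T) :=
  ⟨Nat.sInf_mem hT.infinite_compl.nonempty, fun _ hw => Nat.sInf_le hw⟩

theorem mex_notMem {T : Set ℕ} (hT : T.Finite) : mex T ∉ T :=
  (isLeast_mex hT).1

theorem mex_eq_zero_iff {T : Set ℕ} (hT : T.Finite) : mex T = 0 ↔ 0 ∉ T :=
  ⟨fun h => h ▸ mex_notMem hT, fun h => Nat.eq_zero_of_le_zero (Nat.sInf_le h)⟩

section Grundy

variable {S D : Finset ℕ}

theorem grundy_eq_mex (n : ℕ) :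
    grundy S D n = mex (grundy S D '' followers S D n) := by
  rw [grundy]
  congr 1
  ext
  simp

theorem grundy_ne_of_mem_followers {n m : ℕ} (h : m ∈ followers S D n) :
    grundy S D n ≠ grundy S D m := by
  intro heq
  apply mex_notMem ((followers S D n).finite_toSet.image (grundy S D))
  rw [← grundy_eq_mex, heq]
  exact Set.mem_image_of_mem _ h

theorem grundy_eq_zero_iff {n : ℕ} :
    grundy S D n = 0 ↔ ∀ m ∈ followers S D n, grundy S D m ≠ 0 := by
  rw [grundy_eq_mex, mex_eq_zero_iff ((followers S D n).finite_toSet.image (grundy S D))]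
  simp

end Grundy

local notation "𝒢" => grundy {1, 3} {2, 3}

theorem mem_followers_iff {n m : ℕ} : m ∈ followers {1, 3} {2, 3} n ↔
    (1 ≤ n ∧ m = n - 1) ∨ (3 ≤ n ∧ m = n - 3) ∨
      (0 < n ∧ 2 ∣ n ∧ m = n / 2) ∨ (0 < n ∧ 3 ∣ n ∧ m = n / 3) := by
  simp only [followers, Finset.mem_union, Finset.mem_image, Finset.mem_filter,
    Finset.mem_insert, Finset.mem_singleton]
  constructor
  · rintro (⟨s, ⟨rfl | rfl, -, hs⟩, rfl⟩ | ⟨d, ⟨rfl | rfl, -, hn, hd⟩, rfl⟩) <;> omega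
  · rintro (⟨h, rfl⟩ | ⟨h, rfl⟩ | ⟨h, hd, rfl⟩ | ⟨h, hd, rfl⟩)
    · exact .inl ⟨1, by omega⟩
    · exact .inl ⟨3, by omega⟩
    · exact .inr ⟨2, by omega⟩
    · exact .inr ⟨3, by omega⟩

theorem numFollowers_eq {i : ℕ} (hi : 0 < i) : numFollowers {1, 3} {2, 3} i =
    (if 3 ≤ i then 2 else 1) + (if 2 ∣ i then 1 else 0) + (if 3 ∣ i then 1 else 0) := by
  simp only [numFollowers, Finset.filter_insert, Finset.filter_singleton]
  split_ifs <;> simp_all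

theorem grundy_two : 𝒢 2 = 0 := by
  have h0 : 𝒢 0 = 0 :=
    grundy_eq_zero_iff.2 fun m hm => absurd (followers_lt hm) (Nat.not_lt_zero m)
  have h1 : 𝒢 1 ≠ 0 := h0 ▸ grundy_ne_of_mem_followers (mem_followers_iff.2 (by omega))
  refine grundy_eq_zero_iff.2 fun m hm => ?_
  obtain rfl : m = 1 := by rw [mem_followers_iff] at hm; omega
  exact h1

theorem grundy_ne_zero_of_even_and_eq_zero_of_coprime (n : ℕ) :
    (2 ∣ n → 4 ≤ n → 𝒢 n ≠ 0) ∧ (¬ 2 ∣ n → ¬ 3 ∣ n → 7 ≤ n → 𝒢 n = 0) := by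
  induction n using Nat.strong_induction_on with
  | _ n ih =>
  refine ⟨fun h2 h4 => ?_, fun h2 h3 h7 => ?_⟩
  · obtain ⟨m, hm, hm0⟩ : ∃ m ∈ followers {1, 3} {2, 3} n, 𝒢 m = 0 := by
      rcases (by omega : n = 4 ∨ n = 6 ∨ (8 ≤ n ∧ n % 6 ≠ 4) ∨ (8 ≤ n ∧ n % 6 = 4)) with
        rfl | rfl | hn | hn
      · exact ⟨2, mem_followers_iff.2 (by omega), grundy_two⟩
      · exact ⟨2, mem_followers_iff.2 (by omega), grundy_two⟩
      · exact ⟨n - 1, mem_followers_iff.2 (by omega),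
          (ih _ (by omega)).2 (by omega) (by omega) (by omega)⟩
      · exact ⟨n - 3, mem_followers_iff.2 (by omega),
          (ih _ (by omega)).2 (by omega) (by omega) (by omega)⟩
    exact hm0 ▸ grundy_ne_of_mem_followers hm
  · refine grundy_eq_zero_iff.2 fun m hm => ?_
    obtain rfl | rfl : m = n - 1 ∨ m = n - 3 := by rw [mem_followers_iff] at hm; omega
    · exact (ih _ (by omega)).1 (by omega) (by omega)
    · exact (ih _ (by omega)).1 (by omega) (by omega)

theorem grundy_ne_zero_of_even {n : ℕ} (h2 : 2 ∣ n) (h4 : 4 ≤ n) : 𝒢 n ≠ 0 :=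
  (grundy_ne_zero_of_even_and_eq_zero_of_coprime n).1 h2 h4

theorem grundy_eq_zero_of_coprime {n : ℕ} (h2 : ¬ 2 ∣ n) (h3 : ¬ 3 ∣ n) (h7 : 7 ≤ n) :
    𝒢 n = 0 :=
  (grundy_ne_zero_of_even_and_eq_zero_of_coprime n).2 h2 h3 h7

section GuessSeq

variable {n : ℕ} {σ : ℕ → ℕ}

local notation "g" => guessSeq {1, 3} {2, 3} n σ

theorem guessSeq_of_lt {m : ℕ} (hm : m < n + 3) : g m = σ m := by
  rw [guessSeq, if_pos (by simpa using hm)]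

theorem guessSeq_eq_mex {m : ℕ} (hm : n + 3 ≤ m) : g m =
    mex ({g (m - 1), g (m - 3)} ∪ {w | (2 ∣ m ∧ w = 𝒢 (m / 2)) ∨ (3 ∣ m ∧ w = 𝒢 (m / 3))}) := by
  rw [guessSeq, if_neg (by simpa using hm)]
  congr 1
  ext w
  simp [or_and_right, exists_or, (by omega : 0 < m), (by omega : 1 ≤ m), (by omega : 3 ≤ m),
    eq_comm]

theorem isLeast_guessSeq {m : ℕ} (hm : n + 3 ≤ m) :
    IsLeast {w | w ≠ g (m - 1) ∧ w ≠ g (m - 3) ∧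
      (2 ∣ m → w ≠ 𝒢 (m / 2)) ∧ (3 ∣ m → w ≠ 𝒢 (m / 3))} (g m) := by
  rw [guessSeq_eq_mex hm]
  convert isLeast_mex ((Set.toFinite {g (m - 1), g (m - 3), 𝒢 (m / 2), 𝒢 (m / 3)}).subset ?_)
    using 1
  · ext w
    simp only [ne_eq, Set.mem_ofPred_eq, Set.compl_union, Set.mem_inter_iff, Set.mem_compl_iff,
      Set.mem_insert_iff, Set.mem_singleton_iff, not_or, not_and]
    tauto
  · intro w
    simp only [Set.mem_union, Set.mem_insert_iff, Set.mem_singleton_iff, Set.mem_ofPred_eq]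
    tauto

end GuessSeq

/-- The pattern `(0, 1, T, N, 0, 1, L, 1, 0, N, T, 1)` as a constraint on the value at a position
of residue `r` modulo `12`; the last clause covers the residues `1, 5, 7, 11`. -/
def PatternAt : ℕ → ℕ → Prop
  | 0, v | 4, v | 8, v => v = 0
  | 2, v | 10, v => v = 2 ∨ v = 3
  | 3, v | 9, v => v ≠ 0
  | 6, v => v ≠ 1
  | _, v => v = 1

theorem patternAt_of_isLeast {m a b v : ℕ} (hm : 12 ≤ m) (ha : PatternAt ((m - 1) % 12) a)
    (hb : PatternAt ((m - 3) % 12) b)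
    (hv : IsLeast {w | w ≠ a ∧ w ≠ b ∧ (2 ∣ m → w ≠ 𝒢 (m / 2)) ∧ (3 ∣ m → w ≠ 𝒢 (m / 3))} v) :
    PatternAt (m % 12) v := by
  obtain ⟨hv, hle⟩ := hv
  simp only [mem_lowerBounds, Set.mem_ofPred_eq] at hv hle
  have h0 := hle 0
  have h1 := hle 1
  have h2 := hle 2
  have h3 := hle 3
  have e2 := @grundy_ne_zero_of_even (m / 2)
  have e3 := @grundy_ne_zero_of_even (m / 3)
  have c2 := @grundy_eq_zero_of_coprime (m / 2)
  obtain ⟨ha', hb'⟩ : (m - 1) % 12 = (m % 12 + 11) % 12 ∧ (m - 3) % 12 = (m % 12 + 9) % 12 := by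
    omega
  rw [ha'] at ha
  rw [hb'] at hb
  have hr := Nat.mod_lt m (by norm_num : 12 > 0)
  interval_cases h : m % 12 <;> simp only [PatternAt, Nat.reduceAdd, Nat.reduceMod] at ha hb ⊢
  all_goals grind

theorem patternAt_guessSeq {n : ℕ} (hn : 12 ∣ n) (hn0 : 0 < n) {σ : ℕ → ℕ} (h0 : σ n = 0)
    (h1 : σ (n + 1) = 1) (h2 : σ (n + 2) = 2 ∨ σ (n + 2) = 3) {m : ℕ} (hm : n ≤ m) :
    PatternAt (m % 12) (guessSeq {1, 3} {2, 3} n σ m) := by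
  induction m using Nat.strong_induction_on with
  | _ m ih =>
  by_cases hseed : m < n + 3
  · rw [guessSeq_of_lt hseed]
    obtain rfl | rfl | rfl : n = m ∨ m = n + 1 ∨ m = n + 2 := by omega
    · rw [show n % 12 = 0 by omega]
      exact h0
    · rw [show (n + 1) % 12 = 1 by omega]
      exact h1
    · rw [show (n + 2) % 12 = 2 by omega]
      exact h2
  · exact patternAt_of_isLeast (by omega) (ih _ (by omega) (by omega)) (ih _ (by omega) (by omega))
      (isLeast_guessSeq (by omega))

theorem isGuessSeed_of_le {n : ℕ} (hn : 2 ∣ n) (hn0 : 0 < n) {σ : ℕ → ℕ} (h0 : σ n = 0)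
    (h1 : σ (n + 1) ≤ 1) (h2 : σ (n + 2) ≤ 3) : IsGuessSeed {1, 3} {2, 3} n σ := by
  intro i hi hi3
  replace hi3 : i < n + 3 := by simpa using hi3
  rw [numFollowers_eq (by omega)]
  obtain rfl | rfl | rfl : i = n ∨ i = n + 1 ∨ i = n + 2 := by omega
  all_goals split_ifs <;> omega

/-- In i-MARK({1,3},{2,3}) (so `s = max S = 3`), for every `k ≥ 1` and `T ∈ {2,3}`,
the tuple `(0, 1, T)` is a valid guess seed for starting position `n = 12k`, and its guess
sequence has the 12-periodic pattern `(0, 1, T, N, 0, 1, L, 1, 0, N, T, 1)`, where `N` denotes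
a nonzero value, `T` a value in `{2,3}`, and `L` a value different from 1. -/
theorem imark_13_23_guess_pattern (k T : ℕ) (hk : 1 ≤ k) (hT : T = 2 ∨ T = 3)
    (σ : ℕ → ℕ)
    (hσ : σ = fun i => if i = 12 * k then 0 else if i = 12 * k + 1 then 1
      else if i = 12 * k + 2 then T else 0) :
    IsGuessSeed {1, 3} {2, 3} (12 * k) σ ∧
    ∀ j : ℕ,
      guessSeq {1, 3} {2, 3} (12 * k) σ (12 * k + 12 * j) = 0 ∧
      guessSeq {1, 3} {2, 3} (12 * k) σ (12 * k + 12 * j + 1) = 1 ∧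
      (guessSeq {1, 3} {2, 3} (12 * k) σ (12 * k + 12 * j + 2) = 2 ∨
        guessSeq {1, 3} {2, 3} (12 * k) σ (12 * k + 12 * j + 2) = 3) ∧
      guessSeq {1, 3} {2, 3} (12 * k) σ (12 * k + 12 * j + 3) ≠ 0 ∧
      guessSeq {1, 3} {2, 3} (12 * k) σ (12 * k + 12 * j + 4) = 0 ∧
      guessSeq {1, 3} {2, 3} (12 * k) σ (12 * k + 12 * j + 5) = 1 ∧
      guessSeq {1, 3} {2, 3} (12 * k) σ (12 * k + 12 * j + 6) ≠ 1 ∧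
      guessSeq {1, 3} {2, 3} (12 * k) σ (12 * k + 12 * j + 7) = 1 ∧
      guessSeq {1, 3} {2, 3} (12 * k) σ (12 * k + 12 * j + 8) = 0 ∧
      guessSeq {1, 3} {2, 3} (12 * k) σ (12 * k + 12 * j + 9) ≠ 0 ∧
      (guessSeq {1, 3} {2, 3} (12 * k) σ (12 * k + 12 * j + 10) = 2 ∨
        guessSeq {1, 3} {2, 3} (12 * k) σ (12 * k + 12 * j + 10) = 3) ∧
      guessSeq {1, 3} {2, 3} (12 * k) σ (12 * k + 12 * j + 11) = 1 := by
  have h0 : σ (12 * k) = 0 := by simp [hσ]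
  have h1 : σ (12 * k + 1) = 1 := by simp [hσ]
  have h2 : σ (12 * k + 2) = T := by simp [hσ]
  refine ⟨isGuessSeed_of_le (by omega) (by omega) h0 h1.le (by omega), fun j => ?_⟩
  have hpat (i : ℕ) (hi : i < 12) :
      PatternAt i (guessSeq {1, 3} {2, 3} (12 * k) σ (12 * k + 12 * j + i)) := by
    have := patternAt_guessSeq (dvd_mul_right 12 k) (by omega) h0 h1 (h2 ▸ hT)
      (m := 12 * k + 12 * j + i) (by omega)
    rwa [show (12 * k + 12 * j + i) % 12 = i by omega] at this
  exact ⟨hpat 0 (by norm_num), hpat 1 (by norm_num), hpat 2 (by norm_num), hpat 3 (by norm_num),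
    hpat 4 (by norm_num), hpat 5 (by norm_num), hpat 6 (by norm_num), hpat 7 (by norm_num),
    hpat 8 (by norm_num), hpat 9 (by norm_num), hpat 10 (by norm_num), hpat 11 (by norm_num)⟩
end
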